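/- Let φ : X → Y be a measurable mapping between σ-finite measure spaces satisfying the Luzin N⁻¹-property, and suppose there is a constant c > 0 with J_{φ⁻¹}(y) ≥ c for ν-a.e. y ∈ Y, and that for every ε > 0 there exists a measurable set B ∈ 𝓑 with 0 < ν(B) < ε. If φ induces a bounded composition operator C_φ : L_{r,s}(Y) → L_{p,q}(X) (with 1 < p, r < ∞, 1 ≤ s ≤ q ≤ ∞), then p ≤ r. -/

import Mathlib

open MeasureTheory Set ENNReal NNReal

/-- Distribution function `μ{x : |f(x)| > λ}` of a complex-valued function. -/
noncomputable def distribFn {X : Type*} [MeasurableSpace X] (μ : Measure X)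
    (f : X → ℂ) (lam : ℝ) : ℝ≥0∞ :=
  μ {x | lam < ‖f x‖}

/-- The Lorentz `(p,q)`-norm, `1 < p < ∞`, `1 ≤ q ≤ ∞`, computed via the
distribution function. -/
noncomputable def lorentzNorm {X : Type*} [MeasurableSpace X] (μ : Measure X)
    (p : ℝ) (q : ℝ≥0∞) (f : X → ℂ) : ℝ≥0∞ :=
  if q = ∞ then ⨆ lam ∈ Set.Ioi (0 : ℝ), ENNReal.ofReal lam * (distribFn μ f lam) ^ (1 / p)
  else (q * ∫⁻ lam in Set.Ioi (0 : ℝ),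
      (ENNReal.ofReal lam * (distribFn μ f lam) ^ (1 / p)) ^ q.toReal /
        ENNReal.ofReal lam) ^ (1 / q.toReal)

/-- Membership in the Lorentz space `L_{p,q}`. -/
def MemLorentz {X : Type*} [MeasurableSpace X] (μ : Measure X)
    (p : ℝ) (q : ℝ≥0∞) (f : X → ℂ) : Prop :=
  Measurable f ∧ lorentzNorm μ p q f < ∞

/-!
The indicator of a set `B` has Lorentz norm `ν(B)^{1/r}` in every `L_{r,s}`, and its composition
with `φ` is the indicator of `φ⁻¹(B)`, whose measure is at least `c ν(B)` because `J_{φ⁻¹} ≥ c`.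
Boundedness of `C_φ` thus gives `(c ν(B))^{1/p} ≤ K ν(B)^{1/r}`, i.e.
`c^{1/p} ≤ K ν(B)^{1/r - 1/p}`, for sets of arbitrarily small positive measure; this is
impossible when `1/r - 1/p > 0`.
-/

lemma lintegral_Ioo_zero_one_rpow_sub_one {q : ℝ} (hq : 0 < q) :
    ∫⁻ t in Ioo (0 : ℝ) 1, ENNReal.ofReal t ^ (q - 1) = ENNReal.ofReal q⁻¹ := by
  have hint : IntegrableOn (fun t : ℝ => t ^ (q - 1)) (Ioc 0 1) :=
    (intervalIntegrable_iff_integrableOn_Ioc_of_le zero_le_one).mp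
      (intervalIntegral.intervalIntegrable_rpow' (by linarith))
  rw [setLIntegral_congr_fun measurableSet_Ioo fun t ht => ENNReal.ofReal_rpow_of_pos ht.1,
    ← ofReal_integral_eq_lintegral_ofReal (hint.mono_set Ioo_subset_Ioc_self)
      (ae_restrict_of_forall_mem measurableSet_Ioo fun t ht => Real.rpow_nonneg ht.1.le _),
    ← integral_Ioc_eq_integral_Ioo, ← intervalIntegral.integral_of_le zero_le_one,
    integral_rpow (Or.inl (by linarith))]
  simp [hq.ne']

section IndicatorOne

variable {X : Type*} [MeasurableSpace X] (μ : Measure X) (A : Set X)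

lemma distribFn_indicator_one_of_lt_one {lam : ℝ} (h0 : 0 ≤ lam) (h1 : lam < 1) :
    distribFn μ (A.indicator 1) lam = μ A := by
  unfold distribFn
  congr 1
  ext x
  by_cases hx : x ∈ A <;> simp [hx, h0.not_gt, h1]

lemma distribFn_indicator_one_of_one_le {lam : ℝ} (h : 1 ≤ lam) :
    distribFn μ (A.indicator 1) lam = 0 := by
  unfold distribFn
  convert measure_empty (μ := μ)
  ext x
  by_cases hx : x ∈ A <;> simp [hx, h.not_gt, (zero_lt_one.trans_le h).not_gt]

lemma lorentzNorm_indicator_one {p : ℝ} (hp : 0 < p) {q : ℝ≥0∞} (hq : q ≠ 0) :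
    lorentzNorm μ p q (A.indicator 1) = μ A ^ (1 / p) := by
  unfold lorentzNorm
  split_ifs with hqtop
  · refine le_antisymm (iSup₂_le fun lam hlam => ?_)
      (le_of_forall_lt_one_mul_le fun a ha => ?_)
    · rcases lt_or_ge lam 1 with h1 | h1
      · rw [distribFn_indicator_one_of_lt_one μ A (mem_Ioi.mp hlam).le h1]
        exact mul_le_of_le_one_left' (ofReal_le_one.mpr h1.le)
      · simp [distribFn_indicator_one_of_one_le μ A h1, hp]
    · rcases eq_or_ne a 0 with rfl | ha0
      · simp
      have hlam : a.toReal ∈ Ioi (0 : ℝ) := toReal_pos ha0 ha.ne_top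
      refine le_iSup₂_of_le a.toReal hlam (le_of_eq ?_)
      rw [distribFn_indicator_one_of_lt_one μ A toReal_nonneg
        (toReal_lt_of_lt_ofReal (by simpa using ha)), ofReal_toReal ha.ne_top]
  · set q' := q.toReal
    have hq' : 0 < q' := toReal_pos hq hqtop
    have hintegrand : ∀ lam : ℝ,
        (ENNReal.ofReal lam * distribFn μ (A.indicator 1) lam ^ (1 / p)) ^ q' / ENNReal.ofReal lam
          = (Ioo 0 1).indicator (fun t => ENNReal.ofReal t ^ (q' - 1)) lam * μ A ^ (q' / p) := by
      intro lam
      rcases le_or_gt lam 0 with h0 | h0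
      · simp [ofReal_eq_zero.mpr h0, zero_rpow_of_pos hq', notMem_Ioo_of_le h0]
      rcases lt_or_ge lam 1 with h1 | h1
      · have hlam : ENNReal.ofReal lam ≠ 0 := by simpa using h0
        rw [indicator_of_mem (show lam ∈ Ioo 0 1 from ⟨h0, h1⟩),
          distribFn_indicator_one_of_lt_one μ A h0.le h1, ENNReal.mul_rpow_of_nonneg _ _ hq'.le,
          ← ENNReal.rpow_mul, ENNReal.rpow_sub _ _ hlam ofReal_ne_top, ENNReal.rpow_one,
          ENNReal.mul_div_right_comm, one_div_mul_eq_div]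
      · simp [distribFn_indicator_one_of_one_le μ A h1, hp, zero_rpow_of_pos hq',
          notMem_Ioo_of_ge h1]
    simp_rw [hintegrand]
    rw [lintegral_mul_const _ ((measurable_ofReal.pow_const _).indicator measurableSet_Ioo),
      setLIntegral_indicator measurableSet_Ioo, inter_eq_left.mpr Ioo_subset_Ioi_self,
      lintegral_Ioo_zero_one_rpow_sub_one hq', ofReal_inv_of_pos hq', ofReal_toReal hqtop,
      ← mul_assoc, ENNReal.mul_inv_cancel hq hqtop, one_mul, ← ENNReal.rpow_mul]
    congr 1
    field_simp

end IndicatorOne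

open Filter Topology in
lemma le_of_frequently_mul_rpow_le {a K : ℝ≥0∞} (ha : a ≠ 0) (hK : K ≠ ∞) {p r : ℝ}
    (hr : 0 < r) (h : ∃ᶠ t in 𝓝[>] (0 : ℝ≥0∞), a * t ^ (1 / p) ≤ K * t ^ (1 / r)) :
    p ≤ r := by
  by_contra! hrp
  set δ := 1 / r - 1 / p
  have hδ : 0 < δ := sub_pos.mpr (one_div_lt_one_div_of_lt hr hrp)
  have htendsto : Tendsto (fun t : ℝ≥0∞ => K * t ^ δ) (𝓝[>] 0) (𝓝 0) := by
    have := ENNReal.Tendsto.const_mul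
      (((ENNReal.continuous_rpow_const (y := δ)).tendsto 0).mono_left
        (nhdsWithin_le_nhds (s := Ioi 0))) (Or.inr hK)
    rwa [zero_rpow_of_pos hδ, mul_zero] at this
  have hev : ∀ᶠ t in 𝓝[>] (0 : ℝ≥0∞), K * t ^ δ < a ∧ 0 < t ∧ t < ∞ :=
    (htendsto.eventually (gt_mem_nhds ha.bot_lt)).and
      (eventually_mem_nhdsWithin.and (nhdsWithin_le_nhds (gt_mem_nhds zero_lt_top)))
  obtain ⟨t, hle, hlt, ht0, httop⟩ := (h.and_eventually hev).exists
  have hsplit : t ^ (1 / r) = t ^ δ * t ^ (1 / p) := by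
    rw [← ENNReal.rpow_add _ _ ht0.ne' httop.ne, sub_add_cancel]
  rw [hsplit, ← mul_assoc, ENNReal.mul_le_mul_iff_left (ENNReal.rpow_pos ht0 httop.ne).ne'
    (rpow_ne_top_of_nonneg' ht0 httop.ne)] at hle
  exact hle.not_gt hlt

lemma rpow_measure_preimage_le_of_lorentzNorm_comp_le {X Y : Type*} [MeasurableSpace X]
    [MeasurableSpace Y] {μ : Measure X} {ν : Measure Y} {φ : X → Y} {p r : ℝ} (hp : 0 < p)
    (hr : 0 < r) {q s : ℝ≥0∞} (hq : q ≠ 0) (hs : s ≠ 0) {K : ℝ≥0∞}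
    (hK : ∀ f : Y → ℂ, MemLorentz ν r s f → lorentzNorm μ p q (f ∘ φ) ≤ K * lorentzNorm ν r s f)
    {B : Set Y} (hB : MeasurableSet B) (hνB : ν B ≠ ∞) :
    μ (φ ⁻¹' B) ^ (1 / p) ≤ K * ν B ^ (1 / r) := by
  have hmem : MemLorentz ν r s (B.indicator 1) :=
    ⟨measurable_one.indicator hB, by
      rw [lorentzNorm_indicator_one ν B hr hs]
      exact rpow_lt_top_of_nonneg (by positivity) hνB⟩
  have hcomp : B.indicator (1 : Y → ℂ) ∘ φ = (φ ⁻¹' B).indicator 1 :=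
    funext fun _ => (indicator_comp_right φ).symm
  simpa only [hcomp, lorentzNorm_indicator_one _ _ hp hq, lorentzNorm_indicator_one _ _ hr hs]
    using hK _ hmem

theorem le_of_boundedCompositionOperator_general
    {X Y : Type*} [MeasurableSpace X] [MeasurableSpace Y]
    (μ : Measure X) (ν : Measure Y)
    (φ : X → Y)
    (J : Y → ℝ≥0∞)
    (hJ : ∀ E : Set Y, MeasurableSet E → μ (φ ⁻¹' E) = ∫⁻ y in E, J y ∂ν)
    (c : ℝ≥0) (hc : 0 < c) (hcJ : ∀ᵐ y ∂ν, (c : ℝ≥0∞) ≤ J y)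
    (hsmall : ∀ ε : ℝ≥0∞, 0 < ε → ∃ B : Set Y, MeasurableSet B ∧ 0 < ν B ∧ ν B < ε)
    (p r : ℝ) (hp : 1 < p) (hr : 1 < r)
    (s q : ℝ≥0∞) (hs : 1 ≤ s) (hsq : s ≤ q)
    (hbdd : ∃ K : ℝ≥0, (∀ f : Y → ℂ, MemLorentz ν r s f → MemLorentz μ p q (f ∘ φ)) ∧
        ∀ f : Y → ℂ, MemLorentz ν r s f →
          lorentzNorm μ p q (f ∘ φ) ≤ (K : ℝ≥0∞) * lorentzNorm ν r s f) :
    p ≤ r := by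
  obtain ⟨K, -, hK⟩ := hbdd
  have hs0 : s ≠ 0 := (zero_lt_one.trans_le hs).ne'
  have hq0 : q ≠ 0 := (hs0.bot_lt.trans_le hsq).ne'
  have hp0 : 0 < p := zero_lt_one.trans hp
  refine le_of_frequently_mul_rpow_le (a := (c : ℝ≥0∞) ^ (1 / p)) (K := K)
    (ENNReal.rpow_pos (by simpa using hc) coe_ne_top).ne' coe_ne_top (zero_lt_one.trans hr) ?_
  refine (ENNReal.nhds_zero_basis.inf_principal (Ioi 0)).frequently_iff.mpr fun ε hε => ?_
  obtain ⟨B, hB, hB0, hBε⟩ := hsmall (min ε 1) (lt_min hε one_pos)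
  have hνB : ν B ≠ ∞ := ne_top_of_lt (hBε.trans_le (min_le_right _ _))
  have hpreimage : (c : ℝ≥0∞) * ν B ≤ μ (φ ⁻¹' B) :=
    calc (c : ℝ≥0∞) * ν B = ∫⁻ _ in B, (c : ℝ≥0∞) ∂ν := (setLIntegral_const B _).symm
      _ ≤ ∫⁻ y in B, J y ∂ν := lintegral_mono_ae (ae_restrict_of_ae hcJ)
      _ = μ (φ ⁻¹' B) := (hJ B hB).symm
  refine ⟨ν B, ⟨hBε.trans_le (min_le_left _ _), hB0⟩, ?_⟩
  calc (c : ℝ≥0∞) ^ (1 / p) * ν B ^ (1 / p) = ((c : ℝ≥0∞) * ν B) ^ (1 / p) :=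
        (ENNReal.mul_rpow_of_nonneg _ _ (by positivity)).symm
    _ ≤ μ (φ ⁻¹' B) ^ (1 / p) := by gcongr
    _ ≤ K * ν B ^ (1 / r) := rpow_measure_preimage_le_of_lorentzNorm_comp_le hp0
        (zero_lt_one.trans hr) hq0 hs0 hK hB hνB

/-- If `J_{φ⁻¹} ≥ c > 0` a.e., there exist measurable sets of arbitrarily
small positive measure, and `φ` induces a bounded composition operator
`C_φ : L_{r,s}(Y) → L_{p,q}(X)`, then `p ≤ r`. -/
theorem le_of_boundedCompositionOperator
    {X Y : Type*} [MeasurableSpace X] [MeasurableSpace Y]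
    (μ : Measure X) (ν : Measure Y) [SigmaFinite μ] [SigmaFinite ν]
    (φ : X → Y) (hφ : Measurable φ)
    (hN : ∀ S : Set Y, MeasurableSet S → ν S = 0 → μ (φ ⁻¹' S) = 0)
    (J : Y → ℝ≥0∞) (hJmeas : Measurable J)
    (hJ : ∀ E : Set Y, MeasurableSet E → μ (φ ⁻¹' E) = ∫⁻ y in E, J y ∂ν)
    (c : ℝ≥0) (hc : 0 < c) (hcJ : ∀ᵐ y ∂ν, (c : ℝ≥0∞) ≤ J y)
    (hsmall : ∀ ε : ℝ≥0∞, 0 < ε → ∃ B : Set Y, MeasurableSet B ∧ 0 < ν B ∧ ν B < ε)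
    (p r : ℝ) (hp : 1 < p) (hr : 1 < r)
    (s q : ℝ≥0∞) (hs : 1 ≤ s) (hsq : s ≤ q)
    (hbdd : ∃ K : ℝ≥0, (∀ f : Y → ℂ, MemLorentz ν r s f → MemLorentz μ p q (f ∘ φ)) ∧
        ∀ f : Y → ℂ, MemLorentz ν r s f →
          lorentzNorm μ p q (f ∘ φ) ≤ (K : ℝ≥0∞) * lorentzNorm ν r s f) :
    p ≤ r :=
  le_of_boundedCompositionOperator_general μ ν φ J hJ c hc hcJ hsmall p r hp hr s q hs hsq hbdd
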